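/- Monotonicity of the switch curve for two contents (Lemma 4 of the paper): in the uniform-channel setting with M = 2 contents, let V : 𝒬 → ℝ be monotone and let u, v ∈ Fin 2 with u ≠ v. For any state Q ∈ 𝒬 with Q v < N v: if J_V(Q + e_v, u) ≤ J_V(Q + e_v, v), then J_V(Q, u) ≤ J_V(Q, v). Equivalently, the switch curves s₁(Q₂) and s₂(Q₁) of the optimal two-content policy are monotonically non-decreasing in Q₂ and Q₁, respectively. -/

import Mathlib

/-!
Adding a request for content `v` raises the stage cost of every action by exactly one. Multicasting
`v` clears that request, so the continuation is unchanged and `J_V(·, v)` rises by exactly one; for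
any other action the extra request survives into a componentwise larger next state, so for monotone
`V` the cost `J_V(·, u)` rises by at least one. Hence `J_V(·, u) - J_V(·, v)` does not decrease
along `e_v`.
-/

open Finset

/-- State space of the uniform-channel multicast MDP: request queue vectors capped by `N`. -/
def QSpace (M : ℕ) (N : Fin M → ℕ) : Type :=
  {Q : Fin M → ℕ // ∀ m, Q m ≤ N m}

/-- Next state when content `u` is multicast in state `Q` and arrival `a` occurs. -/
def nextQ {M : ℕ} {N : Fin M → ℕ} (Q : QSpace M N) (u : Fin M) (a : Fin M → ℕ) :
    QSpace M N :=
  ⟨fun m => min ((if m = u then 0 else Q.1 m) + a m) (N m), fun _ => min_le_right _ _⟩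

/-- Per-stage cost in the uniform case. -/
noncomputable def gCost {M : ℕ} {N : Fin M → ℕ} (wp wf : ℝ) (p f : Fin M → ℝ)
    (Q : QSpace M N) (u : Fin M) : ℝ :=
  (∑ m, (Q.1 m : ℝ)) + wp * p u + wf * f u

/-- State-action cost function `J_V(Q,u)`. -/
noncomputable def JCost {M : ℕ} {N : Fin M → ℕ} (𝒜 : Finset (Fin M → ℕ))
    (ρ : (Fin M → ℕ) → ℝ) (wp wf : ℝ) (p f : Fin M → ℝ)
    (V : QSpace M N → ℝ) (Q : QSpace M N) (u : Fin M) : ℝ :=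
  gCost wp wf p f Q u + ∑ a ∈ 𝒜, ρ a * V (nextQ Q u a)

/-- The state `Q + e_v`: component `v` is increased by 1 (requires `Q v < N v`). -/
def addE {M : ℕ} {N : Fin M → ℕ} (Q : QSpace M N) (v : Fin M) (h : Q.1 v < N v) :
    QSpace M N :=
  ⟨Function.update Q.1 v (Q.1 v + 1), by
    intro m
    rcases eq_or_ne m v with rfl | hm
    · simp only [Function.update_self]; exact h
    · simp only [Function.update_of_ne hm]; exact Q.2 m⟩

section

variable {M : ℕ} {N : Fin M → ℕ}

lemma le_addE (Q : QSpace M N) (v : Fin M) (h : Q.1 v < N v) : Q.1 ≤ (addE Q v h).1 := by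
  intro m
  rcases eq_or_ne m v with rfl | hm
  · simp [addE]
  · simp [addE, Function.update_of_ne hm]

lemma sum_addE (Q : QSpace M N) (v : Fin M) (h : Q.1 v < N v) :
    ∑ m, ((addE Q v h).1 m : ℝ) = ∑ m, (Q.1 m : ℝ) + 1 := by
  simp only [addE]
  rw [← Nat.cast_sum, sum_update_of_mem (mem_univ v), ← add_sum_erase _ _ (mem_univ v),
    erase_eq]
  push_cast
  ring

lemma gCost_addE (wp wf : ℝ) (p f : Fin M → ℝ) (Q : QSpace M N) (v : Fin M)
    (h : Q.1 v < N v) (x : Fin M) :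
    gCost wp wf p f (addE Q v h) x = gCost wp wf p f Q x + 1 := by
  simp only [gCost, sum_addE]
  ring

lemma nextQ_mono {Q₁ Q₂ : QSpace M N} (hQ : Q₁.1 ≤ Q₂.1) (u : Fin M) (a : Fin M → ℕ) :
    (nextQ Q₁ u a).1 ≤ (nextQ Q₂ u a).1 := by
  intro m
  simp only [nextQ]
  split_ifs
  · rfl
  · exact min_le_min_right _ (Nat.add_le_add_right (hQ m) _)

lemma nextQ_addE_self (Q : QSpace M N) (v : Fin M) (h : Q.1 v < N v) (a : Fin M → ℕ) :
    nextQ (addE Q v h) v a = nextQ Q v a := by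
  refine Subtype.ext (funext fun m => ?_)
  rcases eq_or_ne m v with rfl | hm
  · simp [nextQ]
  · simp [nextQ, addE, hm]

lemma JCost_addE_self (𝒜 : Finset (Fin M → ℕ)) (ρ : (Fin M → ℕ) → ℝ) (wp wf : ℝ)
    (p f : Fin M → ℝ) (V : QSpace M N → ℝ) (Q : QSpace M N) (v : Fin M) (h : Q.1 v < N v) :
    JCost 𝒜 ρ wp wf p f V (addE Q v h) v = JCost 𝒜 ρ wp wf p f V Q v + 1 := by
  simp only [JCost, gCost_addE, nextQ_addE_self]
  ring

lemma expectation_nextQ_mono {𝒜 : Finset (Fin M → ℕ)} {ρ : (Fin M → ℕ) → ℝ}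
    (hρ : ∀ a ∈ 𝒜, 0 ≤ ρ a) {V : QSpace M N → ℝ}
    (hV : ∀ Q₁ Q₂ : QSpace M N, Q₁.1 ≤ Q₂.1 → V Q₁ ≤ V Q₂)
    {Q₁ Q₂ : QSpace M N} (hQ : Q₁.1 ≤ Q₂.1) (u : Fin M) :
    ∑ a ∈ 𝒜, ρ a * V (nextQ Q₁ u a) ≤ ∑ a ∈ 𝒜, ρ a * V (nextQ Q₂ u a) :=
  sum_le_sum fun a ha => mul_le_mul_of_nonneg_left (hV _ _ (nextQ_mono hQ u a)) (hρ a ha)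

lemma JCost_add_one_le_JCost_addE {𝒜 : Finset (Fin M → ℕ)} {ρ : (Fin M → ℕ) → ℝ}
    (hρ : ∀ a ∈ 𝒜, 0 ≤ ρ a) (wp wf : ℝ) (p f : Fin M → ℝ) {V : QSpace M N → ℝ}
    (hV : ∀ Q₁ Q₂ : QSpace M N, Q₁.1 ≤ Q₂.1 → V Q₁ ≤ V Q₂)
    (Q : QSpace M N) (u v : Fin M) (h : Q.1 v < N v) :
    JCost 𝒜 ρ wp wf p f V Q u + 1 ≤ JCost 𝒜 ρ wp wf p f V (addE Q v h) u := by
  have hexp := expectation_nextQ_mono hρ hV (le_addE Q v h) u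
  simp only [JCost, gCost_addE]
  linarith

end

theorem switch_curve_monotone_two_contents_general
    (N : Fin 2 → ℕ)
    (𝒜 : Finset (Fin 2 → ℕ)) (ρ : (Fin 2 → ℕ) → ℝ)
    (hρ0 : ∀ a ∈ 𝒜, 0 ≤ ρ a)
    (wp wf : ℝ) (p f : Fin 2 → ℝ)
    (V : QSpace 2 N → ℝ)
    (hV : ∀ Q₁ Q₂ : QSpace 2 N, Q₁.1 ≤ Q₂.1 → V Q₁ ≤ V Q₂)
    (u v : Fin 2)
    (Q : QSpace 2 N) (h : Q.1 v < N v)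
    (hswitch : JCost 𝒜 ρ wp wf p f V (addE Q v h) u ≤
      JCost 𝒜 ρ wp wf p f V (addE Q v h) v) :
    JCost 𝒜 ρ wp wf p f V Q u ≤ JCost 𝒜 ρ wp wf p f V Q v := by
  have hu := JCost_add_one_le_JCost_addE hρ0 wp wf p f hV Q u v h
  have hv := JCost_addE_self 𝒜 ρ wp wf p f V Q v h
  linarith

/-- Monotonicity of the switch curve for two contents (Lemma 4): with `M = 2` contents
and a monotone value function `V`, if it is (weakly) better to multicast content `u`
than content `v` at state `Q + e_v`, then it is also better at state `Q`.  Equivalently,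
the switch curves `s₁(Q₂)` and `s₂(Q₁)` are monotonically non-decreasing. -/
theorem switch_curve_monotone_two_contents
    (N : Fin 2 → ℕ)
    (𝒜 : Finset (Fin 2 → ℕ)) (ρ : (Fin 2 → ℕ) → ℝ)
    (hρ0 : ∀ a ∈ 𝒜, 0 ≤ ρ a) (hρ1 : ∑ a ∈ 𝒜, ρ a = 1)
    (wp wf : ℝ) (p f : Fin 2 → ℝ)
    (V : QSpace 2 N → ℝ)
    (hV : ∀ Q₁ Q₂ : QSpace 2 N, Q₁.1 ≤ Q₂.1 → V Q₁ ≤ V Q₂)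
    (u v : Fin 2) (huv : u ≠ v)
    (Q : QSpace 2 N) (h : Q.1 v < N v)
    (hswitch : JCost 𝒜 ρ wp wf p f V (addE Q v h) u ≤
      JCost 𝒜 ρ wp wf p f V (addE Q v h) v) :
    JCost 𝒜 ρ wp wf p f V Q u ≤ JCost 𝒜 ρ wp wf p f V Q v :=
  switch_curve_monotone_two_contents_general N 𝒜 ρ hρ0 wp wf p f V hV u v Q h hswitch
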